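/- The map G_¬ is topologically transitive on (X, d): for all X, Y ∈ X and all radii r_X, r_Y > 0, there exist a point X′ with d(X,X′) < r_X and a time t ∈ ℕ such that d(G_¬^t(X′), Y) < r_Y. -/

import Mathlib

noncomputable def de (n : ℕ) (E F : Fin n → Bool) : ℝ :=
  ∑ k : Fin n, if E k = F k then 0 else 1

noncomputable def ds (n : ℕ) (S T : ℕ → Fin n) : ℝ :=
  (9 / (n : ℝ)) * ∑' k : ℕ, |((S k : ℕ) : ℝ) - ((T k : ℕ) : ℝ)| / 10 ^ (k + 1)

noncomputable def dX (n : ℕ) (X Y : (ℕ → Fin n) × (Fin n → Bool)) : ℝ :=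
  de n X.2 Y.2 + ds n X.1 Y.1

def Ff (n : ℕ) (f : (Fin n → Bool) → Fin n → Bool) (i : Fin n) (x : Fin n → Bool) :
    Fin n → Bool :=
  Function.update x i (f x i)

def Gf (n : ℕ) (f : (Fin n → Bool) → Fin n → Bool)
    (X : (ℕ → Fin n) × (Fin n → Bool)) : (ℕ → Fin n) × (Fin n → Bool) :=
  (fun t => X.1 (t + 1), Ff n f (X.1 0) X.2)

def Gneg (n : ℕ) : (ℕ → Fin n) × (Fin n → Bool) → (ℕ → Fin n) × (Fin n → Bool) :=
  Gf n (fun x i => !(x i))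

/-!
Perturb `X = (S, E)` only in its symbol sequence: keep the first `N` symbols of `S`, so the new
point is within `10^{-N}` of `X`, then list once each coordinate at which the state reached after
these `N` steps differs from the state of `Y = (T, F)`, and continue with `T`. Since `F_¬(i, ·)`
negates bit `i`, the orbit of the new point passes exactly through `Y`.
-/

open Stream'

def FfSeq (n : ℕ) (f : (Fin n → Bool) → Fin n → Bool) (L : List (Fin n)) (E : Fin n → Bool) :
    Fin n → Bool :=
  L.foldl (fun E i => Ff n f i E) E

section Orbit

variable {n : ℕ} (f : (Fin n → Bool) → Fin n → Bool)

theorem Gf_iterate_append (L : List (Fin n)) (S : ℕ → Fin n) (E : Fin n → Bool) :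
    (Gf n f)^[L.length] (L ++ₛ S, E) = (S, FfSeq n f L E) := by
  induction L generalizing E with
  | nil => rfl
  | cons a L ih => exact ih (Ff n f a E)

end Orbit

section Negation

variable {n : ℕ}

theorem Ff_neg_apply (i j : Fin n) (E : Fin n → Bool) :
    Ff n (fun x i => !(x i)) i E j = if j = i then !E j else E j := by
  by_cases h : j = i
  · subst h; simp [Ff]
  · simp [Ff, h]

theorem FfSeq_neg_of_nodup {L : List (Fin n)} (hL : L.Nodup) (E : Fin n → Bool) :
    FfSeq n (fun x i => !(x i)) L E = fun j => if j ∈ L then !E j else E j := by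
  induction L generalizing E with
  | nil => rfl
  | cons a L ih =>
    obtain ⟨haL, hL⟩ := List.nodup_cons.mp hL
    rw [FfSeq, List.foldl_cons, ← FfSeq, ih hL]
    funext j
    by_cases hj : j = a
    · subst hj; simp [Ff_neg_apply, haL]
    · simp [Ff_neg_apply, hj]

theorem exists_FfSeq_neg_eq (E F : Fin n → Bool) :
    ∃ L : List (Fin n), FfSeq n (fun x i => !(x i)) L E = F := by
  classical
  refine ⟨(Finset.univ.filter fun j => E j ≠ F j).toList, ?_⟩
  rw [FfSeq_neg_of_nodup (Finset.nodup_toList _)]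
  funext j
  by_cases h : E j = F j
  · simp [h]
  · simp [h, Bool.eq_not]

end Negation

section Distance

variable {n : ℕ}

theorem de_self (E : Fin n → Bool) : de n E E = 0 := by
  simp [de]

theorem dX_self (X : (ℕ → Fin n) × (Fin n → Bool)) : dX n X X = 0 := by
  simp [dX, de_self, ds]

theorem ds_le_of_eqOn {N : ℕ} {S T : ℕ → Fin n} (h : ∀ k < N, S k = T k) :
    ds n S T ≤ (1 / 10) ^ N := by
  rcases Nat.eq_zero_or_pos n with rfl | hn
  · simp [ds] -- `9 / 0 = 0`
  set g : ℕ → ℝ := fun k => |((S k : ℕ) : ℝ) - ((T k : ℕ) : ℝ)| / 10 ^ (k + 1) with hg_def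
  have hg_le : ∀ k, g k ≤ n / 10 * (1 / 10) ^ k := fun k => by
    have hST : |((S k : ℕ) : ℝ) - ((T k : ℕ) : ℝ)| ≤ n :=
      abs_sub_le_of_nonneg_of_le (by positivity) (by exact_mod_cast (S k).2.le)
        (by positivity) (by exact_mod_cast (T k).2.le)
    calc g k ≤ n / 10 ^ (k + 1) := div_le_div_of_nonneg_right hST (by positivity)
      _ = n / 10 * (1 / 10) ^ k := by rw [pow_succ, one_div_pow]; field_simp
  have hg : Summable g :=
    .of_nonneg_of_le (fun k => by positivity) hg_le
      ((summable_geometric_of_lt_one (by norm_num) (by norm_num)).mul_left _)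
  have htail : HasSum (fun k => n / 10 * (1 / 10 : ℝ) ^ (k + N)) (n / 9 * (1 / 10) ^ N) := by
    have h := (hasSum_geometric_of_lt_one (r := (1 / 10 : ℝ)) (by norm_num) (by norm_num)).mul_left
      ((n : ℝ) / 10 * (1 / 10) ^ N)
    have hval : (n : ℝ) / 10 * (1 / 10) ^ N * (1 - 1 / 10)⁻¹ = n / 9 * (1 / 10) ^ N := by
      norm_num; ring
    simpa only [pow_add, hval, mul_comm, mul_assoc, mul_left_comm] using h
  have hsum : ∑' k, g k ≤ n / 9 * (1 / 10) ^ N := by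
    rw [← hg.sum_add_tsum_nat_add N,
      Finset.sum_eq_zero fun k hk => by simp [hg_def, h k (Finset.mem_range.mp hk)], zero_add]
    exact hasSum_le (fun k => hg_le (k + N)) (hg.comp_injective (add_left_injective N)).hasSum
      htail
  calc ds n S T = 9 / n * ∑' k, g k := rfl
    _ ≤ 9 / n * (n / 9 * (1 / 10) ^ N) := by gcongr
    _ = (1 / 10) ^ N := by field_simp

theorem dX_le_of_eqOn {N : ℕ} {S T : ℕ → Fin n} (E : Fin n → Bool) (h : ∀ k < N, S k = T k) :
    dX n (S, E) (T, E) ≤ (1 / 10) ^ N := by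
  simpa [dX, de_self] using ds_le_of_eqOn h

end Distance

theorem stmt5_general (n : ℕ) :
    ∀ X Y : (ℕ → Fin n) × (Fin n → Bool), ∀ rX > (0 : ℝ), ∀ rY > (0 : ℝ),
      ∃ X' : (ℕ → Fin n) × (Fin n → Bool), ∃ t : ℕ,
        dX n X X' < rX ∧ dX n ((Gneg n)^[t] X') Y < rY := by
  rintro ⟨S, E⟩ ⟨T, F⟩ rX hrX rY hrY
  obtain ⟨N, hN⟩ := exists_pow_lt_of_lt_one hrX (by norm_num : (1 / 10 : ℝ) < 1)
  obtain ⟨L, hL⟩ := exists_FfSeq_neg_eq (FfSeq n (fun x i => !(x i)) (take N S) E) F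
  refine ⟨(take N S ++ₛ (L ++ₛ T), E), L.length + N, ?_, ?_⟩
  · refine (dX_le_of_eqOn E fun k hk => ?_).trans_lt hN
    have hk' : k < (take N S).length := by rwa [length_take N S]
    exact (take_get _ _ _ hk').symm.trans (get_append_left _ _ _ hk').symm
  · have hprefix := Gf_iterate_append (fun x i => !(x i)) (take N S) (L ++ₛ T) E
    rw [length_take N S] at hprefix
    rw [Function.iterate_add_apply, Gneg, hprefix, Gf_iterate_append, hL, dX_self]
    exact hrY

theorem stmt5 (n : ℕ) (hn : 1 ≤ n) :
    ∀ X Y : (ℕ → Fin n) × (Fin n → Bool), ∀ rX > (0 : ℝ), ∀ rY > (0 : ℝ),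
      ∃ X' : (ℕ → Fin n) × (Fin n → Bool), ∃ t : ℕ,
        dX n X X' < rX ∧ dX n ((Gneg n)^[t] X') Y < rY :=
  stmt5_general n
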